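/- Let m ≥ 0, and let n, e, h, a be positive integers with 3^{m+1} ≤ n < 2·3^{m+1}, e < 3^h, and h ≥ m+2. Then p(3^h·a + n, e) ≡ p(n,e) (mod 3), where p(n,e) = Σ_{i=0}^{e} 2i² k(n−1, e−i). -/

import Mathlib

/-- The cardinality of the `n`-dimensional Lee ball of radius `e`. -/
def leeK (n e : ℕ) : ℕ := ∑ i ∈ Finset.range (min n e + 1), 2 ^ i * n.choose i * e.choose i

/-- `p(n,e) = Σ_{i=0}^{e} 2 i² k(n−1, e−i)`. -/
def leeP (n e : ℕ) : ℕ := ∑ i ∈ Finset.range (e + 1), 2 * i ^ 2 * leeK (n - 1) (e - i)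

/-!
By Lucas's theorem, `N.choose i` modulo a prime `p` depends, for `i < p ^ h`, only on the last
`h` base-`p` digits of `N`. Hence adding `p ^ h * a` to `n - 1 < p ^ h` leaves every binomial
coefficient in `leeK (n - 1) j`, `j ≤ e < p ^ h`, unchanged modulo `p`.
-/

open Finset

theorem leeK_eq_sum_range (n e : ℕ) :
    leeK n e = ∑ i ∈ range (e + 1), 2 ^ i * n.choose i * e.choose i := by
  rcases le_or_gt e n with hle | hlt
  · rw [leeK, min_eq_right hle]
  · rw [leeK, min_eq_left hlt.le]
    refine sum_subset (range_subset_range.2 (by omega)) fun i hi hni => ?_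
    rw [mem_range] at hi hni
    rw [Nat.choose_eq_zero_of_lt (by omega : n < i), mul_zero, zero_mul]

section

variable {p : ℕ}

theorem Nat.pow_mul_add_div_pow_mod {h j : ℕ} (a N : ℕ) (hj : j < h) :
    (p ^ h * a + N) / p ^ j % p = N / p ^ j % p := by
  obtain ⟨c, hc⟩ : p ^ (j + 1) ∣ p ^ h := pow_dvd_pow p hj
  rw [← Nat.mod_mul_right_div_self, ← Nat.mod_mul_right_div_self, ← pow_succ, hc, mul_assoc,
    Nat.mul_add_mod]

variable [Fact p.Prime]

theorem Nat.choose_pow_mul_add_modEq {h a N i : ℕ} (hN : N < p ^ h) (hi : i < p ^ h) :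
    (p ^ h * a + N).choose i ≡ N.choose i [MOD p] := by
  rw [← Int.natCast_modEq_iff]
  calc ((p ^ h * a + N).choose i : ℤ)
      ≡ ((p ^ h * a + N) / p ^ h).choose (i / p ^ h) *
          (∏ j ∈ range h, ((p ^ h * a + N) / p ^ j % p).choose (i / p ^ j % p) : ℕ) [ZMOD p] :=
        Choose.choose_modEq_choose_mul_prod_range_choose h
    _ = (∏ j ∈ range h, (N / p ^ j % p).choose (i / p ^ j % p) : ℕ) := by
        rw [Nat.div_eq_of_lt hi, Nat.choose_zero_right, Nat.cast_one, one_mul]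
        congr 1
        exact prod_congr rfl fun j hj => by rw [Nat.pow_mul_add_div_pow_mod a N (mem_range.1 hj)]
    _ ≡ N.choose i [ZMOD p] := by
        push_cast
        exact (Choose.choose_modEq_prod_range_choose hN hi).symm

theorem leeK_pow_mul_add_modEq {h a N e : ℕ} (hN : N < p ^ h) (he : e < p ^ h) :
    leeK (p ^ h * a + N) e ≡ leeK N e [MOD p] := by
  rw [leeK_eq_sum_range, leeK_eq_sum_range]
  refine Nat.ModEq.sum fun i hie => ?_
  have hi : i < p ^ h := by rw [mem_range] at hie; omega
  exact (Nat.choose_pow_mul_add_modEq hN hi).mul_left _ |>.mul_right _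

theorem leeP_pow_mul_add_modEq {h a n e : ℕ} (hn : 0 < n) (hnh : n ≤ p ^ h) (he : e < p ^ h) :
    leeP (p ^ h * a + n) e ≡ leeP n e [MOD p] := by
  rw [leeP, leeP, Nat.add_sub_assoc hn]
  exact Nat.ModEq.sum fun i _ => (leeK_pow_mul_add_modEq (by omega) (by omega)).mul_left _

end

theorem leeP_periodicity_mod_three_general (m n e h a : ℕ) (hn : 0 < n) (hn2 : n < 2 * 3 ^ (m + 1))
    (helt : e < 3 ^ h) (hh : m + 2 ≤ h) :
    leeP (3 ^ h * a + n) e ≡ leeP n e [MOD 3] := by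
  have : Fact (Nat.Prime 3) := ⟨Nat.prime_three⟩
  have hnh : n ≤ 3 ^ h :=
    calc n ≤ 3 * 3 ^ (m + 1) := by omega
      _ = 3 ^ (m + 2) := by ring
      _ ≤ 3 ^ h := Nat.pow_le_pow_right (by norm_num) hh
  exact leeP_pow_mul_add_modEq hn hnh helt

theorem leeP_periodicity_mod_three (m n e h a : ℕ) (hn : 0 < n) (he : 0 < e)
    (hh0 : 0 < h) (ha : 0 < a) (hn1 : 3 ^ (m + 1) ≤ n) (hn2 : n < 2 * 3 ^ (m + 1))
    (helt : e < 3 ^ h) (hh : m + 2 ≤ h) :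
    leeP (3 ^ h * a + n) e ≡ leeP n e [MOD 3] :=
  leeP_periodicity_mod_three_general m n e h a hn hn2 helt hh
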